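/- arXiv:1712.01452 — 6 statements merged into one kernel-verified Lean document; each statement's English description precedes it below -/
import Mathlib

section
/- Let k be a positive integer and f be a C^{k+1} function on the real line. Then f'(x) = (1/h)·Σ_{i=1}^k c_i·[f(x-ih) - f(x)] + O(h^k) as h → 0⁺, where c_i = ((-1)^i / i)·C(k,i). -/
/-!
Expand `t ↦ f (x - t)` by Taylor's theorem to order `k` on `[0, k]`, with remainder
`O(t ^ (k + 1))`, and evaluate at `t = i * h`. In the weighted sum the coefficient of `h ^ j` is
`∑ i, c i * i ^ j = ∑ i, (-1) ^ i * C(k, i) * i ^ (j - 1)` (without its `i = 0` term), an iterated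
forward difference of `r ↦ r ^ (j - 1)` of order `k > j - 1`. Hence it is `-1` for `j = 1` and
`0` for `2 ≤ j ≤ k`, so only `h * f' x` survives and the remainders contribute `O(h ^ (k + 1))`.
-/

open Finset
open scoped Nat

theorem sum_range_neg_one_pow_mul_choose_mul_pow_eq_zero {R : Type*} [CommRing R] {m n : ℕ}
    (h : m < n) : ∑ i ∈ range (n + 1), (-1 : R) ^ i * n.choose i * (i : R) ^ m = 0 := by
  have hΔ := congr_fun (fwdDiff_iter_pow_eq_zero_of_lt (R := R) h) 0
  rw [fwdDiff_iter_eq_sum_shift] at hΔ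
  have hsign : ∀ i ∈ range (n + 1), (-1 : R) ^ i = (-1) ^ n * (-1) ^ (n - i) := by
    intro i hi
    obtain ⟨d, rfl⟩ := Nat.exists_eq_add_of_le (Nat.lt_succ_iff.mp (mem_range.mp hi))
    rw [Nat.add_sub_cancel_left, pow_add, mul_assoc, ← mul_pow]
    simp
  rw [sum_congr rfl fun i hi => by rw [hsign i hi]]
  simp only [mul_assoc, ← mul_sum]
  simpa [mul_assoc] using congr_arg ((-1 : R) ^ n * ·) hΔ

noncomputable def backwardDiffCoeff (k i : ℕ) : ℝ := (-1) ^ i / i * k.choose i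

theorem sum_backwardDiffCoeff_mul_pow {k j : ℕ} (hj : 1 ≤ j) (hjk : j ≤ k) :
    ∑ i ∈ Icc 1 k, backwardDiffCoeff k i * (i : ℝ) ^ j = if j = 1 then -1 else 0 := by
  have hterm : ∀ i ∈ Icc 1 k,
      backwardDiffCoeff k i * (i : ℝ) ^ j = (-1) ^ i * k.choose i * (i : ℝ) ^ (j - 1) := by
    intro i hi
    have hi0 : (i : ℝ) ≠ 0 := by have := (mem_Icc.mp hi).1; positivity
    obtain ⟨l, rfl⟩ := Nat.exists_eq_add_of_le' hj
    rw [backwardDiffCoeff, Nat.add_sub_cancel, pow_succ]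
    field_simp
  have hzero :=
    sum_range_neg_one_pow_mul_choose_mul_pow_eq_zero (R := ℝ) (show j - 1 < k by omega)
  rw [sum_range_eq_add_Ico _ k.add_one_pos, Ico_add_one_right_eq_Icc] at hzero
  rw [sum_congr rfl hterm, eq_neg_of_add_eq_zero_right hzero]
  rcases eq_or_ne j 1 with rfl | hj1
  · simp
  · simp [hj1, show j - 1 ≠ 0 by omega]

theorem sum_backwardDiffCoeff_mul_sum_pow_sub {k : ℕ} (hk : 1 ≤ k) (a : ℕ → ℝ) (h : ℝ) :
    ∑ i ∈ Icc 1 k, backwardDiffCoeff k i * (∑ j ∈ range (k + 1), a j * (i * h) ^ j - a 0) =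
      -(a 1 * h) := by
  calc _ = ∑ i ∈ Icc 1 k, ∑ j ∈ Icc 1 k, a j * h ^ j * (backwardDiffCoeff k i * i ^ j) := by
        refine sum_congr rfl fun i _ => ?_
        rw [sum_range_eq_add_Ico _ k.add_one_pos, Ico_add_one_right_eq_Icc, pow_zero, mul_one,
          add_sub_cancel_left, mul_sum]
        refine sum_congr rfl fun j _ => ?_
        ring
    _ = ∑ j ∈ Icc 1 k, a j * h ^ j * ∑ i ∈ Icc 1 k, backwardDiffCoeff k i * i ^ j := by
        rw [sum_comm]
        simp_rw [mul_sum]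
    _ = ∑ j ∈ Icc 1 k, a j * h ^ j * if j = 1 then -1 else 0 := by
        refine sum_congr rfl fun j hj => ?_
        rw [sum_backwardDiffCoeff_mul_pow (mem_Icc.mp hj).1 (mem_Icc.mp hj).2]
    _ = -(a 1 * h) := by simp [hk]

theorem exists_taylor_comp_sub_remainder_bound {n : ℕ} {f : ℝ → ℝ} (hf : ContDiff ℝ (n + 1) f)
    (x : ℝ) {R : ℝ} (hR : 0 < R) :
    ∃ M, ∀ t ∈ Set.Icc 0 R,
      |f (x - t) - ∑ j ∈ range (n + 1), (-1) ^ j * iteratedDeriv j f x / j ! * t ^ j| ≤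
        M * t ^ (n + 1) := by
  have hg : ContDiff ℝ (n + 1) fun t => f (x - t) := hf.comp (contDiff_const.sub contDiff_id)
  obtain ⟨M, hM⟩ := exists_taylor_mean_remainder_bound hR.le hg.contDiffOn
  refine ⟨M, fun t ht => ?_⟩
  have hT := hM t ht
  rw [Real.norm_eq_abs, sub_zero, taylor_within_apply] at hT
  convert hT using 3
  refine sum_congr rfl fun j hj => ?_
  have hjn : (j : WithTop ℕ∞) ≤ n + 1 := by
    exact_mod_cast (Nat.lt_succ_iff.mp (mem_range.mp hj)).trans (Nat.le_succ n)
  rw [iteratedDerivWithin_eq_iteratedDeriv (uniqueDiffOn_Icc hR) (hg.contDiffAt.of_le hjn)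
    (Set.left_mem_Icc.mpr hR.le), iteratedDeriv_comp_const_sub]
  simp only [sub_zero, smul_eq_mul]
  ring

theorem exists_sum_backwardDiffCoeff_sub_deriv_bound {k : ℕ} (hk : 1 ≤ k) {f : ℝ → ℝ}
    (hf : ContDiff ℝ (k + 1) f) (x : ℝ) :
    ∃ B, ∀ h ∈ Set.Icc (0 : ℝ) 1,
      |∑ i ∈ Icc 1 k, backwardDiffCoeff k i * (f (x - i * h) - f x) - deriv f x * h| ≤
        B * h ^ (k + 1) := by
  obtain ⟨M, hM⟩ := exists_taylor_comp_sub_remainder_bound hf x (R := k) (by positivity)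
  set P : ℝ → ℝ := fun t => ∑ j ∈ range (k + 1), (-1) ^ j * iteratedDeriv j f x / j ! * t ^ j
  refine ⟨∑ i ∈ Icc 1 k, |backwardDiffCoeff k i| * M * i ^ (k + 1), fun h ⟨hh0, hh1⟩ => ?_⟩
  have hP : ∑ i ∈ Icc 1 k, backwardDiffCoeff k i * (P (i * h) - f x) = deriv f x * h := by
    simpa using
      sum_backwardDiffCoeff_mul_sum_pow_sub hk (fun j => (-1) ^ j * iteratedDeriv j f x / j !) h
  rw [← hP, ← sum_sub_distrib, sum_mul]
  refine (abs_sum_le_sum_abs _ _).trans (sum_le_sum fun i hi => ?_)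
  have hih : (i : ℝ) * h ∈ Set.Icc 0 (k : ℝ) := by
    have : (i : ℝ) ≤ k := by exact_mod_cast (mem_Icc.mp hi).2
    exact ⟨by positivity, by nlinarith⟩
  calc |backwardDiffCoeff k i * (f (x - i * h) - f x) - backwardDiffCoeff k i * (P (i * h) - f x)|
      = |backwardDiffCoeff k i| * |f (x - i * h) - P (i * h)| := by rw [← abs_mul]; ring_nf
    _ ≤ |backwardDiffCoeff k i| * (M * (i * h) ^ (k + 1)) := by gcongr; exact hM _ hih
    _ = _ := by ring

theorem backward_difference_order_k (k : ℕ) (hk : 1 ≤ k) (f : ℝ → ℝ)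
    (hf : ContDiff ℝ (k + 1) f)
    (c : ℕ → ℝ) (hc : ∀ i, c i = ((-1) ^ i / i) * (k.choose i)) (x : ℝ) :
    ∃ C > 0, ∃ h₀ > 0, ∀ h : ℝ, 0 < h → h ≤ h₀ →
      |deriv f x - (1 / h) * ∑ i ∈ Finset.Icc 1 k, c i * (f (x - i * h) - f x)|
        ≤ C * h ^ k := by
  obtain rfl : c = backwardDiffCoeff k := funext hc
  obtain ⟨B, hB⟩ := exists_sum_backwardDiffCoeff_sub_deriv_bound hk hf x
  refine ⟨|B| + 1, by positivity, 1, one_pos, fun h hh hh1 => ?_⟩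
  set S := ∑ i ∈ Icc 1 k, backwardDiffCoeff k i * (f (x - i * h) - f x)
  calc |deriv f x - 1 / h * S| = |S - deriv f x * h| / h := by
        rw [show deriv f x - 1 / h * S = -((S - deriv f x * h) / h) by field_simp; ring,
          abs_neg, abs_div, abs_of_pos hh]
    _ ≤ B * h ^ (k + 1) / h := by gcongr; exact hB h ⟨hh.le, hh1⟩
    _ = B * h ^ k := by field_simp; ring
    _ ≤ (|B| + 1) * h ^ k := by gcongr; linarith [le_abs_self B]
end

section
/- Let k be a positive integer and f a C^{k+1} function. Then f'(x) = (1/h)·Σ_{i=0}^k d_i·f(x-ih) + O(h^k), where d_0 = H_k (the kth harmonic number) and d_i = ((-1)^i/i)·C(k,i) for i = 1, ..., k. -/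
open Finset Filter Asymptotics
open scoped Nat Topology

/-!
By Taylor's theorem, `f (x - i * h) = ∑_{m ≤ k} f⁽ᵐ⁾(x) (-i h)ᵐ / m! + O(h^(k+1))`, so
`∑ᵢ dᵢ f (x - i h) = ∑_{m ≤ k} f⁽ᵐ⁾(x) (-h)ᵐ / m! · ∑ᵢ dᵢ iᵐ + O(h^(k+1))`. The weights are
chosen so that the moments `∑ᵢ dᵢ iᵐ` (`m ≤ k`) are `-1` for `m = 1` and `0` otherwise, which
leaves `h f'(x) + O(h^(k+1))`. For `m ≥ 1` the moment is `∑_{i ≥ 1} (-1)ⁱ C(k,i) i^(m-1)`: a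
`k`-th finite difference of a polynomial of degree `< k`, which vanishes, minus its `i = 0` term
(`1` if `m = 1`). For `m = 0` it vanishes by the identity `∑_{i=1}^k (-1)^(i+1) C(k,i) / i = H_k`.
-/

theorem sum_range_neg_one_pow_mul_choose_mul_pow {R : Type*} [CommRing R] {p k : ℕ}
    (hpk : p < k) : ∑ i ∈ range (k + 1), (-1 : R) ^ i * k.choose i * (i : R) ^ p = 0 := by
  have h := congrFun (fwdDiff_iter_pow_eq_zero_of_lt (R := R) hpk) 0
  rw [fwdDiff_iter_eq_sum_shift] at h
  calc ∑ i ∈ range (k + 1), (-1 : R) ^ i * k.choose i * (i : R) ^ p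
      = (-1) ^ k * ∑ i ∈ range (k + 1),
          ((-1 : ℤ) ^ (k - i) * k.choose i) • (0 + i • (1 : R)) ^ p := by
        rw [mul_sum]
        refine sum_congr rfl fun i hi => ?_
        have hik : (-1 : R) ^ k = (-1) ^ i * (-1) ^ (k - i) := by
          rw [← pow_add, Nat.add_sub_cancel' (Nat.lt_succ_iff.mp (mem_range.mp hi))]
        rw [hik, zsmul_eq_mul, nsmul_one, zero_add]
        have hsq : (-1 : R) ^ (k - i) * (-1) ^ (k - i) = 1 := by
          rw [← mul_pow, neg_one_mul, neg_neg, one_pow]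
        push_cast
        linear_combination -((-1) ^ i * k.choose i * (i : R) ^ p) * hsq
    _ = 0 := by rw [h, Pi.zero_apply, mul_zero]

theorem sum_range_succ_eq_add_sum_Icc {M : Type*} [AddCommMonoid M] (f : ℕ → M) (n : ℕ) :
    ∑ i ∈ range (n + 1), f i = f 0 + ∑ i ∈ Icc 1 n, f i := by
  rw [Nat.range_succ_eq_Icc_zero, ← Finset.insert_Icc_add_one_left_eq_Icc (Nat.zero_le n),
    sum_insert (by simp), zero_add]

theorem sum_Icc_neg_one_pow_mul_choose {R : Type*} [CommRing R] {k : ℕ} (hk : k ≠ 0) :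
    ∑ i ∈ Icc 1 k, (-1 : R) ^ i * k.choose i = -1 := by
  have h := sum_range_neg_one_pow_mul_choose_mul_pow (R := R) (Nat.pos_of_ne_zero hk)
  simp only [pow_zero, mul_one, sum_range_succ_eq_add_sum_Icc, Nat.choose_zero_right,
    Nat.cast_one] at h
  linear_combination h

theorem sum_Icc_neg_one_pow_div_mul_choose {K : Type*} [Field K] [CharZero K] (k : ℕ) :
    ∑ i ∈ Icc 1 k, (-1 : K) ^ i / i * k.choose i = -∑ j ∈ Icc 1 k, (1 : K) / j := by
  induction k with
  | zero => simp
  | succ k ih =>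
    have hsplit : ∀ i ∈ Icc 1 (k + 1), (-1 : K) ^ i / i * (k + 1).choose i
        = (-1) ^ i / i * k.choose i + (-1) ^ i * (k + 1).choose i / (k + 1) := by
      intro i hi
      obtain ⟨hi1, hik⟩ := mem_Icc.mp hi
      have hc : (k.choose i : K) * (k + 1) = (k + 1).choose i * (k + 1 - i) := by
        exact_mod_cast Nat.choose_mul_succ_eq k i
      have hi0 : (i : K) ≠ 0 := by exact_mod_cast (by omega : i ≠ 0)
      field_simp
      linear_combination -hc
    have hlast : ∑ i ∈ Icc 1 (k + 1), (-1 : K) ^ i / i * k.choose i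
        = ∑ i ∈ Icc 1 k, (-1 : K) ^ i / i * k.choose i := by
      rw [sum_Icc_succ_top (by omega), Nat.choose_succ_self, Nat.cast_zero, mul_zero, add_zero]
    rw [sum_congr rfl hsplit, sum_add_distrib, hlast, ih, ← sum_div,
      sum_Icc_neg_one_pow_mul_choose k.succ_ne_zero, sum_Icc_succ_top (by omega)]
    push_cast
    ring

noncomputable def backwardDiffWeight (k i : ℕ) : ℝ :=
  if i = 0 then ∑ j ∈ Icc 1 k, (1 : ℝ) / j else (-1) ^ i / i * k.choose i

theorem sum_backwardDiffWeight_mul_pow {k m : ℕ} (hmk : m ≤ k) :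
    ∑ i ∈ range (k + 1), backwardDiffWeight k i * (i : ℝ) ^ m = if m = 1 then -1 else 0 := by
  cases m with
  | zero =>
    have hIcc : ∀ i ∈ Icc 1 k, backwardDiffWeight k i = (-1) ^ i / i * k.choose i :=
      fun i hi => if_neg (by have := (mem_Icc.mp hi).1; omega)
    simp only [pow_zero, mul_one, sum_range_succ_eq_add_sum_Icc, sum_congr rfl hIcc,
      sum_Icc_neg_one_pow_div_mul_choose]
    simp [backwardDiffWeight]
  | succ p =>
    have hshift : ∀ i ∈ range k, backwardDiffWeight k (i + 1) * ((i + 1 : ℕ) : ℝ) ^ (p + 1)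
        = (-1) ^ (i + 1) * k.choose (i + 1) * ((i + 1 : ℕ) : ℝ) ^ p := by
      intro i _
      rw [backwardDiffWeight, if_neg i.succ_ne_zero]
      field_simp
      ring
    have halt := sum_range_neg_one_pow_mul_choose_mul_pow (R := ℝ) (p := p) (k := k) (by omega)
    rw [sum_range_succ'] at halt ⊢
    rw [sum_congr rfl hshift]
    simp only [Nat.cast_zero, zero_pow p.succ_ne_zero, mul_zero, add_zero, pow_zero,
      Nat.choose_zero_right, Nat.cast_one, one_mul, Nat.add_eq_right, zero_pow_eq] at halt ⊢
    split_ifs at halt ⊢ <;> linarith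

theorem isBigO_sub_taylorWithinEval_univ {E : Type*} [NormedAddCommGroup E] [NormedSpace ℝ E]
    {f : ℝ → E} {n : ℕ} (hf : ContDiff ℝ (n + 1) f) (x : ℝ) :
    (fun t => f (x + t) - taylorWithinEval f n Set.univ x (x + t)) =O[𝓝 0]
      fun t => t ^ (n + 1) := by
  have hx : Tendsto (fun t : ℝ => x + t) (𝓝 0) (𝓝 x) := by
    simpa using tendsto_const_nhds.add (tendsto_id (x := 𝓝 (0 : ℝ)))
  -- Taylor at order `n + 1` gives `o(t^(n+1))`; the extra top term is `O(t^(n+1))`.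
  have hsucc := ((taylor_isLittleO_univ (n := n + 1) (by exact_mod_cast hf)).comp_tendsto hx).isBigO
  simp only [Function.comp_def, add_sub_cancel_left] at hsucc
  have hlast : (fun t => taylorWithinEval f (n + 1) Set.univ x (x + t)
      - taylorWithinEval f n Set.univ x (x + t)) =O[𝓝 0] fun t => t ^ (n + 1) := by
    refine isBigO_of_le'
      (c := ‖((n + 1 : ℝ) * n !)⁻¹‖ * ‖iteratedDerivWithin (n + 1) f Set.univ x‖) _ fun t => ?_
    rw [taylorWithinEval_succ, add_sub_cancel_left, norm_smul, add_sub_cancel_left, norm_mul,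
      mul_right_comm]
  simpa only [sub_add_sub_cancel] using hsucc.add hlast

theorem taylorWithinEval_univ_add (f : ℝ → ℝ) (n : ℕ) (x t : ℝ) :
    taylorWithinEval f n Set.univ x (x + t) =
      ∑ m ∈ range (n + 1), iteratedDeriv m f x * t ^ m / m ! := by
  rw [taylor_within_apply]
  refine sum_congr rfl fun m _ => ?_
  rw [iteratedDerivWithin_univ, add_sub_cancel_left, smul_eq_mul]
  ring

section Stencil

variable {ι : Type*} (s : Finset ι) (d c : ι → ℝ) {f : ℝ → ℝ} {n : ℕ}

theorem sum_mul_taylorWithinEval_univ_eq_mul_deriv (hn : 1 ≤ n)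
    (hmom : ∀ m ≤ n, ∑ i ∈ s, d i * c i ^ m = if m = 1 then 1 else 0) (x h : ℝ) :
    ∑ i ∈ s, d i * taylorWithinEval f n Set.univ x (x + c i * h) = h * deriv f x := by
  simp_rw [taylorWithinEval_univ_add, mul_sum]
  rw [sum_comm]
  calc ∑ m ∈ range (n + 1), ∑ i ∈ s, d i * (iteratedDeriv m f x * (c i * h) ^ m / m !)
      = ∑ m ∈ range (n + 1),
          iteratedDeriv m f x * h ^ m / m ! * ∑ i ∈ s, d i * c i ^ m := by
        refine sum_congr rfl fun m _ => ?_
        rw [mul_sum]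
        exact sum_congr rfl fun i _ => by ring
    _ = ∑ m ∈ range (n + 1), iteratedDeriv m f x * h ^ m / m ! * if m = 1 then 1 else 0 :=
        sum_congr rfl fun m hm => by rw [hmom m (Nat.lt_succ_iff.mp (mem_range.mp hm))]
    _ = h * deriv f x := by
        simp [mem_range.mpr (Nat.succ_lt_succ_iff.mpr hn), iteratedDeriv_one, mul_comm]

theorem isBigO_sum_mul_sub_mul_deriv (hf : ContDiff ℝ (n + 1) f) (hn : 1 ≤ n)
    (hmom : ∀ m ≤ n, ∑ i ∈ s, d i * c i ^ m = if m = 1 then 1 else 0) (x : ℝ) :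
    (fun h => ∑ i ∈ s, d i * f (x + c i * h) - h * deriv f x) =O[𝓝 0]
      fun h => h ^ (n + 1) := by
  have hnode : ∀ i ∈ s, (fun h => d i * (f (x + c i * h)
      - taylorWithinEval f n Set.univ x (x + c i * h))) =O[𝓝 0] fun h => h ^ (n + 1) := by
    intro i _
    have hc : Tendsto (fun h : ℝ => c i * h) (𝓝 0) (𝓝 0) := by
      simpa using (tendsto_id (x := 𝓝 (0 : ℝ))).const_mul (c i)
    refine (((isBigO_sub_taylorWithinEval_univ hf x).comp_tendsto hc).const_mul_left (d i)).trans ?_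
    simpa only [Function.comp_def, mul_pow] using isBigO_const_mul_self (c i ^ (n + 1)) _ _
  refine (IsBigO.sum hnode).congr_left fun h => ?_
  rw [← sum_mul_taylorWithinEval_univ_eq_mul_deriv s d c hn hmom x h, ← sum_sub_distrib]
  simp only [Finset.sum_apply, mul_sub]

end Stencil

theorem exists_pos_bound_of_isBigO_pow {g : ℝ → ℝ} {n : ℕ}
    (hg : g =O[𝓝 0] fun h => h ^ n) :
    ∃ C > 0, ∃ h₀ > 0, ∀ h : ℝ, 0 < h → h ≤ h₀ → |g h| ≤ C * h ^ n := by
  obtain ⟨C, hC, hCg⟩ := hg.exists_pos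
  obtain ⟨ε, hε, hball⟩ := Metric.eventually_nhds_iff.mp hCg.bound
  refine ⟨C, hC, ε / 2, half_pos hε, fun h hh hle => ?_⟩
  have hdist : dist h 0 < ε := by rw [Real.dist_0_eq_abs, abs_of_pos hh]; linarith
  simpa [abs_of_pos hh] using hball hdist

theorem backward_difference_explicit (k : ℕ) (hk : 1 ≤ k) (f : ℝ → ℝ)
    (hf : ContDiff ℝ (k + 1) f)
    (d : ℕ → ℝ)
    (hd0 : d 0 = ∑ j ∈ Finset.Icc 1 k, (1 : ℝ) / j)
    (hdi : ∀ i, 1 ≤ i → i ≤ k → d i = ((-1) ^ i / i) * (k.choose i)) (x : ℝ) :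
    ∃ C > 0, ∃ h₀ > 0, ∀ h : ℝ, 0 < h → h ≤ h₀ →
      |deriv f x - (1 / h) * ∑ i ∈ Finset.range (k + 1), d i * f (x - i * h)|
        ≤ C * h ^ k := by
  have hd : ∀ i ∈ range (k + 1), d i = backwardDiffWeight k i := by
    intro i hi
    rcases Nat.eq_zero_or_pos i with rfl | hi0
    · exact hd0
    · rw [backwardDiffWeight, if_neg hi0.ne', hdi i hi0 (Nat.lt_succ_iff.mp (mem_range.mp hi))]
  have hmom : ∀ m ≤ k,
      ∑ i ∈ range (k + 1), d i * (-(i : ℝ)) ^ m = if m = 1 then 1 else 0 := by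
    intro m hm
    have hneg : ∀ i ∈ range (k + 1),
        d i * (-(i : ℝ)) ^ m = (-1) ^ m * (backwardDiffWeight k i * (i : ℝ) ^ m) := by
      intro i hi
      rw [neg_pow, hd i hi]
      ring
    rw [sum_congr rfl hneg, ← mul_sum, sum_backwardDiffWeight_mul_pow hm]
    split_ifs <;> simp_all
  obtain ⟨C, hC, h₀, hh₀, hbound⟩ := exists_pos_bound_of_isBigO_pow
    (isBigO_sum_mul_sub_mul_deriv (range (k + 1)) d (fun i => -(i : ℝ)) hf hk hmom x)
  refine ⟨C, hC, h₀, hh₀, fun h hh hle => ?_⟩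
  have hnodes : ∑ i ∈ range (k + 1), d i * f (x + -(i : ℝ) * h)
      = ∑ i ∈ range (k + 1), d i * f (x - i * h) := by
    simp only [neg_mul, ← sub_eq_add_neg]
  have hscale : deriv f x - (1 / h) * ∑ i ∈ range (k + 1), d i * f (x - i * h)
      = -(∑ i ∈ range (k + 1), d i * f (x + -(i : ℝ) * h) - h * deriv f x) / h := by
    rw [hnodes]
    field_simp
    ring
  calc |deriv f x - (1 / h) * ∑ i ∈ range (k + 1), d i * f (x - i * h)|
      = |∑ i ∈ range (k + 1), d i * f (x + -(i : ℝ) * h) - h * deriv f x| / h := by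
        rw [hscale, abs_div, abs_neg, abs_of_pos hh]
    _ ≤ C * h ^ (k + 1) / h := by gcongr; exact hbound h hh hle
    _ = C * h ^ k := by field_simp; ring
end

section
/- Let m and n be positive integers and define c_0 = 0 and c_i = (-1)^{i-1}·C(n+m, i+m) / (i·C(n+m, m)) for i = -m, ..., -1, 1, ..., n. Then Σ_{i=-m}^n c_i·i = 1 and, for each j = 2, ..., n+m, Σ_{i=-m}^n c_i·i^j = 0. -/
/-!
Put `N = n + m` and `i = k - m` with `0 ≤ k ≤ N`. For `i ≠ 0` the factor `1 / i` in `c_i`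
cancels one power of `i`, so `∑ c_i i^j` with `j = d + 1` is `(-1)^(m+1) / C(N, m)` times the
alternating sum `∑_k (-1)^k C(N, k) (k - m)^d` with its `k = m` term removed. The full
alternating sum is, up to sign, the `N`-th forward difference of a polynomial of degree `d < N`,
hence `0`; so only the removed term survives, and it contributes `0^d`: `1` for `j = 1` and `0`
for `j ≥ 2`.
-/
open Finset

theorem sum_range_neg_one_pow_mul_choose_mul_sub_pow_eq_zero {R : Type*} [CommRing R]
    {N d : ℕ} (hd : d < N) (y : R) :
    ∑ k ∈ range (N + 1), (-1) ^ k * N.choose k * ((k : R) - y) ^ d = 0 := by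
  have hΔ : (fwdDiff (1 : R))^[N] (fun x : R => x ^ d) (-y) = 0 := by
    rw [fwdDiff_iter_pow_eq_zero_of_lt hd, Pi.zero_apply]
  rw [fwdDiff_iter_eq_sum_shift] at hΔ
  calc _ = (-1) ^ N *
        ∑ k ∈ range (N + 1), (((-1 : ℤ) ^ (N - k) * N.choose k) • (-y + k • 1) ^ d) := by
        rw [mul_sum]
        refine sum_congr rfl fun k hk => ?_
        have hkN : k ≤ N := Nat.lt_succ_iff.mp (mem_range.mp hk)
        rw [zsmul_eq_mul, nsmul_one, neg_add_eq_sub, ← mul_assoc]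
        push_cast
        obtain ⟨r, rfl⟩ := Nat.exists_eq_add_of_le hkN
        have hr : ((-1 : R) ^ r) * (-1) ^ r = 1 := by rw [← mul_pow]; norm_num
        rw [Nat.add_sub_cancel_left, pow_add]
        linear_combination (-(-1) ^ k * ((k + r).choose k : R) * ((k : R) - y) ^ d) * hr
    _ = 0 := by rw [hΔ, mul_zero]

theorem Finset.sum_Icc_neg_natCast_eq_sum_range {M : Type*} [AddCommMonoid M] (f : ℤ → M)
    (m n : ℕ) : ∑ i ∈ Icc (-(m : ℤ)) n, f i = ∑ k ∈ range (n + m + 1), f (k - m) := by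
  refine sum_nbij' (fun i => (i + m).toNat) (fun k => k - m) ?_ ?_ ?_ ?_ ?_ <;>
    intro a ha <;> simp only [mem_Icc, mem_range] at ha ⊢ <;> first | omega | congr 1; omega

noncomputable def centeredDiffCoeff (K : Type*) [Field K] (m n : ℕ) (i : ℤ) : K :=
  if i = 0 then 0 else (-1) ^ (i - 1) * ((n + m).choose (i + m).toNat) / (i * ((n + m).choose m))

section
variable {K : Type*} [Field K] [CharZero K]

theorem centeredDiffCoeff_sub_mul_sub (m n k : ℕ) :
    centeredDiffCoeff K m n (k - m) * ((k : K) - m) =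
      (-1) ^ (m + 1) / (n + m).choose m * ((-1) ^ k * (n + m).choose k) +
        if k = m then 1 else 0 := by
  have hchoose : ((n + m).choose m : K) ≠ 0 := by exact_mod_cast (Nat.choose_pos (by omega)).ne'
  have hsq : ((-1 : K) ^ m) ^ 2 = 1 := by rw [← pow_mul, pow_mul']; norm_num
  unfold centeredDiffCoeff
  by_cases hk : k = m
  · subst hk
    simp only [sub_self, if_true, zero_mul, pow_succ, mul_neg_one]
    field_simp
    linear_combination hsq
  · have hk' : (k : ℤ) - m ≠ 0 := by omega
    have hkK : (k : K) - m ≠ 0 := sub_ne_zero.mpr (by exact_mod_cast hk)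
    rw [if_neg hk', if_neg hk, add_zero, sub_add_cancel, Int.toNat_natCast]
    push_cast
    rw [zpow_sub₀ (by norm_num), zpow_sub₀ (by norm_num), zpow_natCast, zpow_natCast]
    field_simp
    linear_combination ((n + m).choose k : K) * hsq

theorem sum_centeredDiffCoeff_mul_pow_succ {m n d : ℕ} (hd : d < n + m) :
    ∑ i ∈ Icc (-(m : ℤ)) n, centeredDiffCoeff K m n i * (i : K) ^ (d + 1) = 0 ^ d := by
  rw [sum_Icc_neg_natCast_eq_sum_range]
  push_cast
  calc _ = ∑ k ∈ range (n + m + 1),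
        centeredDiffCoeff K m n (k - m) * ((k : K) - m) * ((k : K) - m) ^ d := by
        simp_rw [pow_succ', mul_assoc]
    _ = (-1) ^ (m + 1) / (n + m).choose m *
          ∑ k ∈ range (n + m + 1), (-1) ^ k * (n + m).choose k * ((k : K) - m) ^ d +
        ∑ k ∈ range (n + m + 1), if k = m then ((k : K) - m) ^ d else 0 := by
        simp_rw [centeredDiffCoeff_sub_mul_sub, add_mul, sum_add_distrib, mul_sum, ite_mul,
          one_mul, zero_mul, mul_assoc]
    _ = 0 ^ d := by
        rw [sum_range_neg_one_pow_mul_choose_mul_sub_pow_eq_zero hd, sum_ite_eq',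
          if_pos (by simp), sub_self, mul_zero, zero_add]

end

theorem centered_diff_moments_general (m n : ℕ) (hm : 1 ≤ m)
    (c : ℤ → ℝ) (hc0 : c 0 = 0)
    (hc : ∀ i : ℤ, -(m : ℤ) ≤ i → i ≤ n → i ≠ 0 →
      c i = (-1 : ℝ) ^ (i - 1) * ((n + m).choose (i + m).toNat) /
              (i * ((n + m).choose m))) :
    (∑ i ∈ Finset.Icc (-(m : ℤ)) n, c i * i = 1) ∧
    (∀ j, 2 ≤ j → j ≤ n + m →
      ∑ i ∈ Finset.Icc (-(m : ℤ)) n, c i * (i : ℝ) ^ j = 0) := by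
  have hcoeff : ∀ i ∈ Icc (-(m : ℤ)) n, c i = centeredDiffCoeff ℝ m n i := by
    intro i hi
    obtain ⟨hmi, hin⟩ := mem_Icc.mp hi
    unfold centeredDiffCoeff
    split_ifs with hi0
    · rw [hi0, hc0]
    · exact hc i hmi hin hi0
  have hmoment : ∀ d < n + m, ∑ i ∈ Icc (-(m : ℤ)) n, c i * (i : ℝ) ^ (d + 1) = 0 ^ d :=
    fun d hd => by
      rw [sum_congr rfl fun i hi => by rw [hcoeff i hi]]
      exact sum_centeredDiffCoeff_mul_pow_succ hd
  refine ⟨by simpa using hmoment 0 (by omega), fun j hj2 hjN => ?_⟩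
  obtain ⟨d, rfl⟩ : ∃ d, j = d + 1 := ⟨j - 1, by omega⟩
  rw [hmoment d (by omega), zero_pow (by omega)]

theorem centered_diff_moments (m n : ℕ) (hm : 1 ≤ m) (hn : 1 ≤ n)
    (c : ℤ → ℝ) (hc0 : c 0 = 0)
    (hc : ∀ i : ℤ, -(m : ℤ) ≤ i → i ≤ n → i ≠ 0 →
      c i = (-1 : ℝ) ^ (i - 1) * ((n + m).choose (i + m).toNat) /
              (i * ((n + m).choose m))) :
    (∑ i ∈ Finset.Icc (-(m : ℤ)) n, c i * i = 1) ∧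
    (∀ j, 2 ≤ j → j ≤ n + m →
      ∑ i ∈ Finset.Icc (-(m : ℤ)) n, c i * (i : ℝ) ^ j = 0) :=
  centered_diff_moments_general m n hm c hc0 hc
end

section
/- For any real numbers r and λ, positive integer p, and each k = 1, 2, ..., p, the polynomial identity Σ_{i=0}^p (r+i)^k · C(-r+λ, i) · C(r+p-λ, p-i) = λ^k holds. -/
/-!
Write `x = λ - r`, `y = r + p - λ`, so that `x + y = p`, and let `S_k(x)` be the sum with weights
`C(x, i) C(y, p - i)`. Vandermonde gives `S_0 = C(x + y, p)`, and the absorption identity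
`(x - i) C(x, i) = x C(x - 1, i)` turns `r + i = (r + x) - (x - i)` into the recursion
`S_{k+1}(x) = (r + x) S_k(x) - x S_k(x - 1)`. When `x + y = m < p` the same recursion, started
from `S_0 = C(m, p) = 0`, shows that all moments of order `k ≤ m` vanish; hence for `x + y = p`
only the term `(r + x)^k = λ^k` survives.
-/

/-- Generalized binomial coefficient `C(r, k)` for real `r`. -/
noncomputable def genChoose (r : ℝ) (k : ℕ) : ℝ :=
  (∏ j ∈ Finset.range k, (r - j)) / (k.factorial : ℝ)

open Finset Polynomial

theorem genChoose_eq_ringChoose (r : ℝ) (k : ℕ) : genChoose r k = Ring.choose r k := by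
  rw [Ring.choose_eq_smul, ← aeval_eq_smeval, aeval_def, eval₂_eq_eval_map, descPochhammer_map,
    descPochhammer_eval_eq_prod_range, genChoose, smul_eq_mul, div_eq_inv_mul]

theorem genChoose_natCast (m k : ℕ) : genChoose m k = m.choose k := by
  rw [genChoose_eq_ringChoose, Ring.choose_natCast]

theorem sum_genChoose_mul_genChoose (x y : ℝ) (n : ℕ) :
    ∑ i ∈ range (n + 1), genChoose x i * genChoose y (n - i) = genChoose (x + y) n := by
  simp only [genChoose_eq_ringChoose]
  rw [Ring.add_choose_eq n (Commute.all x y),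
    Nat.sum_antidiagonal_eq_sum_range_succ (fun a b => Ring.choose x a * Ring.choose y b)]

theorem sub_mul_genChoose (x : ℝ) (i : ℕ) :
    (x - i) * genChoose x i = x * genChoose (x - 1) i := by
  have hprod : (∏ j ∈ range i, (x - j)) * (x - i) = x * ∏ j ∈ range i, (x - 1 - j) := by
    rw [← prod_range_succ (fun j : ℕ => x - j), prod_range_succ', mul_comm]
    push_cast
    simp only [sub_zero, sub_add_eq_sub_sub, sub_right_comm x]
  rw [genChoose, genChoose, ← mul_div_assoc, mul_comm, hprod, mul_div_assoc]

noncomputable def hypergeomMoment (r x y : ℝ) (n k : ℕ) : ℝ :=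
  ∑ i ∈ range (n + 1), (r + i) ^ k * genChoose x i * genChoose y (n - i)

theorem hypergeomMoment_zero (r x y : ℝ) (n : ℕ) :
    hypergeomMoment r x y n 0 = genChoose (x + y) n := by
  simp only [hypergeomMoment, pow_zero, one_mul, sum_genChoose_mul_genChoose]

theorem hypergeomMoment_succ (r x y : ℝ) (n k : ℕ) :
    hypergeomMoment r x y n (k + 1) =
      (r + x) * hypergeomMoment r x y n k - x * hypergeomMoment r (x - 1) y n k := by
  simp only [hypergeomMoment, mul_sum, ← sum_sub_distrib]
  refine sum_congr rfl fun i _ => ?_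
  linear_combination (-((r + i) ^ k * genChoose y (n - i))) * sub_mul_genChoose x i

theorem hypergeomMoment_eq_zero {r x y : ℝ} {m n k : ℕ} (hxy : x + y = m) (hmn : m < n)
    (hkm : k ≤ m) : hypergeomMoment r x y n k = 0 := by
  induction k generalizing x m with
  | zero => rw [hypergeomMoment_zero, hxy, genChoose_natCast, Nat.choose_eq_zero_of_lt hmn,
      Nat.cast_zero]
  | succ k ih =>
    obtain ⟨m, rfl⟩ : ∃ m', m = m' + 1 := ⟨m - 1, by omega⟩
    have hxy' : x - 1 + y = m := by push_cast at hxy; linarith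
    rw [hypergeomMoment_succ, ih hxy (by omega) (by omega), ih hxy' (by omega) (by omega)]
    ring

theorem hypergeomMoment_eq_pow {r x y : ℝ} {n k : ℕ} (hxy : x + y = n) (hkn : k ≤ n) :
    hypergeomMoment r x y n k = (r + x) ^ k := by
  induction k with
  | zero => rw [hypergeomMoment_zero, hxy, genChoose_natCast, Nat.choose_self, Nat.cast_one,
      pow_zero]
  | succ k ih =>
    have hxy' : x - 1 + y = (n - 1 : ℕ) := by push_cast [show 1 ≤ n by omega]; linarith
    rw [hypergeomMoment_succ, ih (by omega), hypergeomMoment_eq_zero hxy' (by omega) (by omega)]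
    ring

theorem fractional_moment_identity_general (r lam : ℝ) (p : ℕ)
    (k : ℕ) (hk2 : k ≤ p) :
    ∑ i ∈ Finset.range (p + 1),
      (r + i) ^ k * genChoose (-r + lam) i * genChoose (r + p - lam) (p - i)
      = lam ^ k := by
  have h := hypergeomMoment_eq_pow (r := r) (by ring : -r + lam + (r + p - lam) = p) hk2
  rwa [add_neg_cancel_left] at h

theorem fractional_moment_identity (r lam : ℝ) (p : ℕ) (hp : 1 ≤ p)
    (k : ℕ) (hk1 : 1 ≤ k) (hk2 : k ≤ p) :
    ∑ i ∈ Finset.range (p + 1),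
      (r + i) ^ k * genChoose (-r + lam) i * genChoose (r + p - lam) (p - i)
      = lam ^ k :=
  fractional_moment_identity_general r lam p k hk2
end

section
/- Let a be real, d nonzero real, and k a positive integer with a_i = a + d(i-1) ≠ 0 for all i = 1, ..., k. Define c_{a_i} = (1/a_i)·C(-a_1/d, i-1)·C(a_k/d, k-i). Then Σ_{i=1}^k c_{a_i}·a_i = 1 and Σ_{i=1}^k c_{a_i}·a_i^j = 0 for each j = 2, ..., k. -/
open Finset Polynomial

namespace Lagrange

variable {F ι : Type*} [Field F] [DecidableEq ι] {s : Finset ι} {v : ι → F}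

theorem eval_basis (i : ι) (z : F) :
    (Lagrange.basis s v i).eval z = ∏ j ∈ s.erase i, (z - v j) / (v i - v j) := by
  simp only [Lagrange.basis, basisDivisor, eval_prod, eval_mul, eval_C, eval_sub, eval_X]
  exact prod_congr rfl fun _ _ => inv_mul_eq_div _ _

theorem sum_eval_basis_mul_eval (hvs : Set.InjOn v s) {p : F[X]} (hp : p.degree < #s) (z : F) :
    ∑ i ∈ s, (Lagrange.basis s v i).eval z * p.eval (v i) = p.eval z := by
  conv_rhs => rw [eq_interpolate hvs hp]
  simp only [interpolate_apply, eval_finsetSum, eval_mul, eval_C, mul_comm]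

theorem sum_eval_basis_mul_pow (hvs : Set.InjOn v s) {m : ℕ} (hm : m < #s) (z : F) :
    ∑ i ∈ s, (Lagrange.basis s v i).eval z * v i ^ m = z ^ m := by
  simpa using sum_eval_basis_mul_eval hvs (p := X ^ m)
    (by rw [degree_X_pow]; exact_mod_cast hm) z

end Lagrange

theorem prod_range_sub_eq_factorial {R : Type*} [CommRing R] (m : ℕ) :
    ∏ j ∈ range m, ((m : R) - j) = m.factorial := by
  rw [← prod_range_reflect, ← prod_range_add_one_eq_factorial]
  push_cast
  refine prod_congr rfl fun j hj => ?_
  rw [Nat.cast_sub (by simp at hj; omega), Nat.cast_sub (by simp at hj; omega)]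
  push_cast; ring

theorem genChoose_eq_prod_div (r : ℝ) (m : ℕ) :
    genChoose r m = ∏ j ∈ range m, (r - j) / ((m : ℝ) - j) := by
  rw [genChoose, prod_div_distrib, prod_range_sub_eq_factorial]

theorem eval_basis_Icc_zero_of_arithmetic {a d : ℝ} (hd : d ≠ 0) {A : ℕ → ℝ}
    (hA : ∀ i, A i = a + d * ((i : ℝ) - 1)) {k i : ℕ} (hi : i ∈ Icc 1 k) :
    (Lagrange.basis (Icc 1 k) A i).eval 0 =
      genChoose (-(A 1) / d) (i - 1) * genChoose (A k / d) (k - i) := by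
  obtain ⟨p, rfl⟩ : ∃ p, i = p + 1 := ⟨i - 1, by simp at hi; omega⟩
  obtain ⟨q, rfl⟩ : ∃ q, k = p + 1 + q := ⟨k - (p + 1), by simp at hi; omega⟩
  have hlow : ((Icc 1 (p + 1 + q)).erase (p + 1)).filter (· < p + 1) = Ico 1 (p + 1) := by
    ext j; simp; omega
  have hhigh :
      ((Icc 1 (p + 1 + q)).erase (p + 1)).filter (¬ · < p + 1) = Ico (p + 2) (p + 2 + q) := by
    ext j; simp; omega
  rw [Lagrange.eval_basis, ← prod_filter_mul_prod_filter_not _ (· < p + 1), hlow, hhigh,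
    prod_Ico_eq_prod_range, prod_Ico_eq_prod_range, genChoose_eq_prod_div, genChoose_eq_prod_div,
    ← prod_range_reflect _ (p + 1 + q - (p + 1))]
  simp only [Nat.add_sub_cancel, Nat.add_sub_cancel_left]
  congr 1 <;> refine prod_congr rfl fun m hm => ?_
  · have hnum : 0 - A (1 + m) = d * (-(A 1) / d - m) := by
      simp only [hA]; field_simp; push_cast; ring
    have hden : A (p + 1) - A (1 + m) = d * ((p : ℝ) - m) := by simp only [hA]; push_cast; ring
    rw [hnum, hden, mul_div_mul_left _ _ hd]
  · have hreflect : ((q - 1 - m : ℕ) : ℝ) = q - 1 - m := by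
      rw [Nat.cast_sub (by simp at hm; omega), Nat.cast_sub (by simp at hm; omega)]; simp
    have hnum : 0 - A (p + 2 + m) = -d * (A (p + 1 + q) / d - (q - 1 - m : ℕ)) := by
      rw [hreflect]; simp only [hA]; field_simp; push_cast; ring
    have hden : A (p + 1) - A (p + 2 + m) = -d * ((q : ℝ) - (q - 1 - m : ℕ)) := by
      rw [hreflect]; simp only [hA]; push_cast; ring
    rw [hnum, hden, mul_div_mul_left _ _ (neg_ne_zero.mpr hd)]

theorem arithmetic_diff_moments (a d : ℝ) (hd : d ≠ 0) (k : ℕ) (hk : 1 ≤ k)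
    (A : ℕ → ℝ) (hA : ∀ i, A i = a + d * ((i : ℝ) - 1))
    (hA0 : ∀ i ∈ Finset.Icc 1 k, A i ≠ 0)
    (c : ℕ → ℝ)
    (hc : ∀ i, c i = (1 / A i) * genChoose (-(A 1) / d) (i - 1) * genChoose (A k / d) (k - i)) :
    (∑ i ∈ Finset.Icc 1 k, c i * A i = 1) ∧
    (∀ j, 2 ≤ j → j ≤ k → ∑ i ∈ Finset.Icc 1 k, c i * A i ^ j = 0) := by
  have hinj : Set.InjOn A (Icc 1 k) := fun i _ j _ h => by
    simpa [hA, hd, sub_left_inj] using h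
  have hweight : ∀ i ∈ Icc 1 k, c i * A i = (Lagrange.basis (Icc 1 k) A i).eval 0 := by
    intro i hi
    rw [hc, eval_basis_Icc_zero_of_arithmetic hd hA hi]
    field_simp [hA0 i hi]
  have hmoment : ∀ j, 1 ≤ j → j ≤ k → ∑ i ∈ Icc 1 k, c i * A i ^ j = 0 ^ (j - 1) := by
    intro j hj1 hjk
    rw [← Lagrange.sum_eval_basis_mul_pow hinj (by simp; omega) 0]
    refine sum_congr rfl fun i hi => ?_
    rw [← hweight i hi, mul_assoc, ← pow_succ', Nat.sub_add_cancel hj1]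
  refine ⟨by simpa using hmoment 1 le_rfl hk, fun j hj2 hjk => ?_⟩
  rw [hmoment j (by omega) hjk, zero_pow (by omega)]
end

section
/- Let a be real, d nonzero, n a positive integer with a_i = a + d(i-1) ≠ 0 for all i, and let A be the n×n matrix with A_{ij} = (a + (j-1)d)^i. Then A is invertible with inverse B given by B_{ij} = ((-1)^{i+j}/(a+(i-1)d)) · σ_{n-j}(T \ {a+(i-1)d}) / (d^{n-1}·(i-1)!·(n-i)!), where T = {a, a+d, ..., a+(n-1)d} and σ_k denotes the kth elementary symmetric polynomial of the elements of the set (with σ_0 = 1). -/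
/-- `esymm s k` is the `k`-th elementary symmetric polynomial of the elements
of the finite set `s` of real numbers (with `esymm s 0 = 1`). -/
noncomputable def esymm (s : Finset ℝ) (k : ℕ) : ℝ :=
  ∑ t ∈ Finset.powersetCard k s, ∏ x ∈ t, x

/-!
Write `x_l = a + l d`. By Vieta, the `j`-th row of `B` lists the coefficients of
`(-1)^(j+1) / (x_j D_j) · (-1)^n · X · ∏_{l ≠ j} (X - x_l)`, where
`D_j = d^(n-1) j! (n-1-j)!`, so the `(j, k)` entry of `B * A` is that polynomial evaluated at
`x_k`. It vanishes for `k ≠ j`, and for `k = j` it is `1` because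
`∏_{l ≠ j} (x_j - x_l) = (-1)^(n-1-j) D_j`. For square matrices a one-sided inverse is
two-sided.
-/

open Finset Polynomial Nat

lemma esymm_eq_val_esymm (s : Finset ℝ) (k : ℕ) : esymm s k = s.val.esymm k := by
  simpa [esymm] using (Finset.esymm_map_val id s k).symm

lemma prod_sub_eq_sum_esymm (s : Finset ℝ) (y : ℝ) :
    ∏ c ∈ s, (y - c) =
      ∑ i ∈ range (#s + 1), (-1) ^ (#s - i) * esymm s (#s - i) * y ^ i := by
  have hdeg : (s.val.map fun c => X - C c).prod.natDegree < #s + 1 := by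
    rw [natDegree_multiset_prod_X_sub_C_eq_card]
    exact Nat.lt_succ_self _
  have heval : ∏ c ∈ s, (y - c) = (s.val.map fun c => X - C c).prod.eval y := by
    rw [eval_multiset_prod, Multiset.map_map]
    simp only [Function.comp_def, eval_sub, eval_X, eval_C]
    rfl
  rw [heval, eval_eq_sum_range' hdeg]
  refine sum_congr rfl fun i hi => ?_
  rw [Multiset.prod_X_sub_C_coeff _ (Nat.le_of_lt_succ (mem_range.mp hi)), esymm_eq_val_esymm]
  rfl

lemma sum_neg_one_pow_mul_esymm_mul_pow_succ {n : ℕ} (s : Finset ℝ) (hs : #s + 1 = n)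
    (y : ℝ) :
    ∑ i : Fin n, (-1) ^ ((i : ℕ) + 1) * esymm s (n - ((i : ℕ) + 1)) * y ^ ((i : ℕ) + 1) =
      (-1) ^ n * y * ∏ c ∈ s, (y - c) := by
  subst hs
  rw [Fin.sum_univ_eq_sum_range
      (fun i => (-1) ^ (i + 1) * esymm s (#s + 1 - (i + 1)) * y ^ (i + 1)),
    prod_sub_eq_sum_esymm, mul_sum]
  refine sum_congr rfl fun i hi => ?_
  have hsign : (-1 : ℝ) ^ (i + 1) = (-1) ^ (#s + 1) * (-1) ^ (#s - i) := by
    rw [← pow_add]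
    exact neg_one_pow_congr (by simp only [Nat.even_iff]; have := mem_range.mp hi; omega)
  rw [hsign, Nat.add_sub_add_right]
  ring

section CommRing

variable {R : Type*} [CommRing R]

lemma prod_range_natCast_sub_self (j : ℕ) : ∏ l ∈ range j, ((j : R) - l) = j ! := by
  rw [← descPochhammer_eval_eq_prod_range, descPochhammer_eval_eq_descFactorial,
    Nat.descFactorial_self]

lemma prod_Ico_natCast_sub (j n : ℕ) :
    ∏ l ∈ Ico (j + 1) n, ((j : R) - l) = (-1) ^ (n - 1 - j) * (n - 1 - j)! := by
  rw [prod_Ico_eq_prod_range, show n - (j + 1) = n - 1 - j by omega]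
  calc ∏ i ∈ range (n - 1 - j), ((j : R) - (j + 1 + i : ℕ))
      = ∏ i ∈ range (n - 1 - j), -((i : R) + 1) := prod_congr rfl fun i _ => by push_cast; ring
    _ = _ := by
      rw [prod_neg, card_range, ← prod_range_add_one_eq_factorial]
      push_cast
      rfl

lemma prod_erase_natCast_sub {n j : ℕ} (hj : j < n) :
    ∏ l ∈ (range n).erase j, ((j : R) - l) = (-1) ^ (n - 1 - j) * j ! * (n - 1 - j)! := by
  have hsplit : (range n).erase j = range j ∪ Ico (j + 1) n := by
    ext l
    simp only [mem_erase, mem_range, mem_union, mem_Ico]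
    omega
  have hdisj : Disjoint (range j) (Ico (j + 1) n) := by
    simp only [disjoint_left, mem_range, mem_Ico]
    omega
  rw [hsplit, prod_union hdisj, prod_range_natCast_sub_self, prod_Ico_natCast_sub]
  ring

end CommRing

section Field

variable {K : Type*} [Field K] [CharZero K]

lemma injective_arithProg (a : K) {d : K} (hd : d ≠ 0) :
    Function.Injective fun l : ℕ => a + l * d := fun l m h => by
  simpa [hd] using h

lemma prod_erase_arithProg_sub [DecidableEq K] (a : K) {d : K} (hd : d ≠ 0) {n j : ℕ}
    (hj : j < n) :
    ∏ c ∈ ((range n).image fun l : ℕ => a + l * d).erase (a + j * d), (a + j * d - c) =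
      (-1) ^ (n - 1 - j) * d ^ (n - 1) * j ! * (n - 1 - j)! := by
  rw [← image_erase (injective_arithProg a hd),
    prod_image fun l _ m _ h => injective_arithProg a hd h]
  calc ∏ l ∈ (range n).erase j, (a + j * d - (a + l * d))
      = ∏ l ∈ (range n).erase j, (d * ((j : K) - l)) := prod_congr rfl fun l _ => by ring
    _ = _ := by
      rw [prod_mul_distrib, prod_const, card_erase_of_mem (mem_range.mpr hj), card_range,
        prod_erase_natCast_sub hj]
      ring

end Field

theorem vandermonde_inverse_general (a d : ℝ) (hd : d ≠ 0) (n : ℕ)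
    (hne : ∀ i ∈ Finset.Icc 1 n, a + d * ((i : ℝ) - 1) ≠ 0)
    (T : Finset ℝ) (hT : T = (Finset.range n).image (fun j : ℕ => a + (j : ℝ) * d))
    (A B : Matrix (Fin n) (Fin n) ℝ)
    (hA : ∀ i j : Fin n, A i j = (a + (j : ℝ) * d) ^ ((i : ℕ) + 1))
    (hB : ∀ i j : Fin n, B i j =
      ((-1 : ℝ) ^ (((i : ℕ) + 1) + ((j : ℕ) + 1)) / (a + (i : ℝ) * d)) *
        (esymm (T.erase (a + (i : ℝ) * d)) (n - ((j : ℕ) + 1)) /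
          (d ^ (n - 1) * (Nat.factorial (i : ℕ)) * (Nat.factorial (n - 1 - (i : ℕ))))) ) :
    A * B = 1 ∧ B * A = 1 := by
  suffices hBA : B * A = 1 from ⟨mul_eq_one_comm.mpr hBA, hBA⟩
  have hmem : ∀ k : Fin n, a + k * d ∈ T := fun k =>
    hT ▸ mem_image_of_mem _ (mem_range.mpr k.2)
  ext j k
  have hxj : a + j * d ≠ 0 := by
    simpa [mul_comm] using hne (j + 1) (mem_Icc.mpr ⟨by omega, j.2⟩)
  have hD : d ^ (n - 1) * (j : ℕ)! * (n - 1 - j)! ≠ 0 := by positivity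
  have hS : #(T.erase (a + j * d)) + 1 = n := by
    rw [card_erase_of_mem (hmem j), hT, card_image_of_injective _ (injective_arithProg a hd),
      card_range, Nat.sub_add_cancel (Nat.one_le_of_lt j.2)]
  have hrow : (B * A) j k =
      (-1) ^ ((j : ℕ) + 1) / ((a + j * d) * (d ^ (n - 1) * (j : ℕ)! * (n - 1 - j)!)) *
        ((-1) ^ n * (a + k * d) * ∏ c ∈ T.erase (a + j * d), (a + k * d - c)) := by
    rw [Matrix.mul_apply, ← sum_neg_one_pow_mul_esymm_mul_pow_succ _ hS, mul_sum]
    refine sum_congr rfl fun i _ => ?_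
    rw [hB, hA, pow_add]
    field_simp
  rw [hrow, Matrix.one_apply]
  split_ifs with hjk
  · subst hjk
    have hsign : (-1 : ℝ) ^ ((j : ℕ) + 1) * (-1) ^ n * (-1) ^ (n - 1 - j) = 1 := by
      rw [← pow_add, ← pow_add]
      exact Even.neg_one_pow ⟨n, by omega⟩
    rw [hT, prod_erase_arithProg_sub a hd j.2, div_mul_eq_mul_div,
      div_eq_one_iff_eq (mul_ne_zero hxj hD)]
    linear_combination (a + j * d) * (d ^ (n - 1) * (j : ℕ)! * (n - 1 - j)!) * hsign
  · have hk : a + k * d ∈ T.erase (a + j * d) :=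
      mem_erase.mpr ⟨fun h => hjk (Fin.ext (injective_arithProg a hd h).symm), hmem k⟩
    rw [prod_eq_zero hk (sub_self _), mul_zero, mul_zero]

theorem vandermonde_inverse (a d : ℝ) (hd : d ≠ 0) (n : ℕ) (hn : 1 ≤ n)
    (hne : ∀ i ∈ Finset.Icc 1 n, a + d * ((i : ℝ) - 1) ≠ 0)
    (T : Finset ℝ) (hT : T = (Finset.range n).image (fun j : ℕ => a + (j : ℝ) * d))
    (A B : Matrix (Fin n) (Fin n) ℝ)
    (hA : ∀ i j : Fin n, A i j = (a + (j : ℝ) * d) ^ ((i : ℕ) + 1))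
    (hB : ∀ i j : Fin n, B i j =
      ((-1 : ℝ) ^ (((i : ℕ) + 1) + ((j : ℕ) + 1)) / (a + (i : ℝ) * d)) *
        (esymm (T.erase (a + (i : ℝ) * d)) (n - ((j : ℕ) + 1)) /
          (d ^ (n - 1) * (Nat.factorial (i : ℕ)) * (Nat.factorial (n - 1 - (i : ℕ))))) ) :
    A * B = 1 ∧ B * A = 1 :=
  vandermonde_inverse_general a d hd n hne T hT A B hA hB
end
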